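/- For every k ∈ {1, …, m}, one has ∫_{x∈ℝ} P_{(n_1,…,n_m)}(x) · x^{n_k} · exp(−x²/2 + a_k x) dx = √(2π) · (n_k)! · exp(a_k²/2) · ∏_{l≠k} (a_k − a_l)^{n_l}. -/

import Mathlib

/-!
Put `Q = ∏ₗ (X - aₗ)^{nₗ}`. For a standard Gaussian `U`, `𝔼 Q(z + cU)` is `exp ((c²/2) D²) Q`
evaluated at `z`: induct on the degree, the step from `P` to `X * P` being Gaussian integration
by parts. With `c = i` this gives `P_n = exp (-D²/2) Q`. Completing the square and taking
`c = 1`, the integral becomes `√(2π) e^{a_k²/2}` times `exp (D²/2) (X^{n_k} exp (-D²/2) Q)`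
evaluated at `a_k`. Conjugation by `exp (D²/2)` turns multiplication by `X` into `X + D`, and
since `Q` vanishes to order `n_k` at `a_k`, the only term of `((X + D)^{n_k} Q) (a_k)` that
survives is `(D^{n_k} Q) (a_k) = n_k! ∏_{l ≠ k} (a_k - a_l)^{n_l}`.
-/

open MeasureTheory Finset

/-- The multiple Hermite function of type II (integral representation). -/
noncomputable def mhP {m : ℕ} (a : Fin m → ℝ) (ν : Fin m → ℕ) (x : ℝ) : ℂ :=
  (Real.sqrt (2 * Real.pi) : ℂ)⁻¹ *
    ∫ u : ℝ, Complex.exp (-(u : ℂ) ^ 2 / 2) *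
      ∏ k, ((x : ℂ) - (a k : ℂ) + Complex.I * (u : ℂ)) ^ (ν k)

open Polynomial Complex

namespace Polynomial

section Raising

variable {R : Type*} [CommRing R]

noncomputable def raising (c : R) (P : R[X]) : R[X] :=
  X * P + c • derivative P

theorem eval_iterate_raising_of_dvd (c a : R) {n : ℕ} {Q : R[X]} (h : (X - C a) ^ n ∣ Q) :
    ((raising c)^[n] Q).eval a = c ^ n * (derivative^[n] Q).eval a := by
  induction n generalizing Q with
  | zero => simp
  | succ n ih =>
    have hX : (X - C a) ^ (n + 1) ∣ X * Q := dvd_mul_of_dvd_right h X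
    have hR : (X - C a) ^ n ∣ raising c Q :=
      dvd_add (dvd_mul_of_dvd_right ((pow_dvd_pow _ n.le_succ).trans h) X)
        (by simpa [smul_eq_C_mul] using
          dvd_mul_of_dvd_right (pow_sub_one_dvd_derivative_of_pow_dvd h) (C c))
    have hroot : (derivative^[n] (X * Q)).eval a = 0 := by
      have := pow_sub_dvd_iterate_derivative_of_pow_dvd n hX
      rw [Nat.add_sub_cancel_left, pow_one, dvd_iff_isRoot] at this
      exact this
    rw [Function.iterate_succ_apply, ih hR, raising, iterate_map_add, iterate_derivative_smul,
      eval_add, hroot, eval_smul, ← Function.iterate_succ_apply, pow_succ, smul_eq_mul]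
    ring

theorem eval_iterate_derivative_X_sub_C_pow_mul (a : R) (n : ℕ) (S : R[X]) :
    (derivative^[n] ((X - C a) ^ n * S)).eval a = n.factorial * S.eval a := by
  rw [iterate_derivative_mul, eval_finsetSum, sum_eq_single_of_mem 0 (mem_range.mpr n.succ_pos)]
  · simp [iterate_derivative_X_sub_pow_self]
  · intro k hk hk0
    rw [iterate_derivative_X_sub_pow, eval_smul, eval_mul, eval_smul, eval_pow, eval_sub, eval_X,
      eval_C, sub_self, zero_pow (by simp at hk; omega)]
    simp

end Raising

section HeatSemigroup

variable {K : Type*} [Field K]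

/-- The operator `exp (t D²)` on polynomials. -/
noncomputable def heatSemigroup (t : K) (Q : K[X]) : K[X] :=
  ∑ j ∈ range (Q.natDegree + 1), (t ^ j / j.factorial) • derivative^[2 * j] Q

theorem heatSemigroup_eq_sum (t : K) {Q : K[X]} {N : ℕ} (hN : Q.natDegree < N) :
    heatSemigroup t Q = ∑ j ∈ range N, (t ^ j / j.factorial) • derivative^[2 * j] Q := by
  refine sum_subset (range_subset_range.mpr hN) fun j _ hj => ?_
  rw [iterate_derivative_eq_zero (by simp at hj; omega), smul_zero]

theorem heatSemigroup_add (t : K) (P Q : K[X]) :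
    heatSemigroup t (P + Q) = heatSemigroup t P + heatSemigroup t Q := by
  let N := (P + Q).natDegree + P.natDegree + Q.natDegree + 1
  rw [heatSemigroup_eq_sum t (N := N) (by omega), heatSemigroup_eq_sum t (N := N) (by omega),
    heatSemigroup_eq_sum t (N := N) (by omega), ← sum_add_distrib]
  simp only [iterate_map_add, smul_add]

theorem heatSemigroup_smul (t c : K) (Q : K[X]) :
    heatSemigroup t (c • Q) = c • heatSemigroup t Q := by
  rw [heatSemigroup_eq_sum t ((natDegree_smul_le c Q).trans_lt Q.natDegree.lt_succ_self),
    heatSemigroup, smul_sum]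
  simp only [iterate_derivative_smul, smul_comm c]

theorem heatSemigroup_C (t c : K) : heatSemigroup t (C c) = C c := by
  simp [heatSemigroup]

theorem heatSemigroup_derivative (t : K) (Q : K[X]) :
    heatSemigroup t (derivative Q) = derivative (heatSemigroup t Q) := by
  rw [heatSemigroup_eq_sum t (N := Q.natDegree + 1)
    ((natDegree_derivative_le Q).trans_lt (by omega)), heatSemigroup, derivative_sum]
  simp only [derivative_smul, ← Function.iterate_succ_apply' derivative,
    Function.iterate_succ_apply]

variable [CharZero K]

theorem heatSemigroup_X_mul (t : K) (Q : K[X]) :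
    heatSemigroup t (X * Q) =
      X * heatSemigroup t Q + (2 * t) • derivative (heatSemigroup t Q) := by
  have hXQ : (X * Q).natDegree < Q.natDegree + 2 :=
    (natDegree_mul_le.trans (by rw [natDegree_X])).trans_lt (by omega)
  have hshift (i : ℕ) :
      (t ^ (i + 1) / (i + 1).factorial) • (2 * (i + 1)) • derivative^[2 * (i + 1) - 1] Q =
        (2 * t) • derivative ((t ^ i / i.factorial) • derivative^[2 * i] Q) := by
    rw [derivative_smul, ← Function.iterate_succ_apply' derivative, smul_smul,
      show 2 * (i + 1) - 1 = (2 * i).succ by omega, ← Nat.cast_smul_eq_nsmul K, smul_smul,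
      Nat.factorial_succ]
    congr 1
    have := i.factorial_ne_zero
    push_cast
    field_simp
    ring
  rw [heatSemigroup_eq_sum t hXQ]
  simp only [mul_comm X Q, iterate_derivative_mul_X, smul_add, sum_add_distrib]
  congr 1
  · rw [heatSemigroup_eq_sum t (N := Q.natDegree + 2) (by omega), mul_comm, sum_mul]
    simp only [smul_mul_assoc]
  · rw [sum_range_succ', heatSemigroup, derivative_sum, smul_sum, mul_zero, zero_smul, smul_zero,
      add_zero]
    exact sum_congr rfl fun i _ => hshift i

theorem heatSemigroup_heatSemigroup_neg (t : K) (Q : K[X]) :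
    heatSemigroup t (heatSemigroup (-t) Q) = Q := by
  induction Q using Polynomial.induction_on with
  | C c => rw [heatSemigroup_C, heatSemigroup_C]
  | add P Q hP hQ => rw [heatSemigroup_add, heatSemigroup_add, hP, hQ]
  | monomial n c h =>
    rw [pow_succ, ← mul_assoc, mul_comm _ X, heatSemigroup_X_mul, heatSemigroup_add,
      heatSemigroup_smul, heatSemigroup_X_mul, heatSemigroup_derivative, h, add_assoc, ← add_smul]
    simp

theorem heatSemigroup_X_mul_heatSemigroup_neg (t : K) (Q : K[X]) :
    heatSemigroup t (X * heatSemigroup (-t) Q) = raising (2 * t) Q := by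
  rw [heatSemigroup_X_mul, heatSemigroup_heatSemigroup_neg, raising]

theorem heatSemigroup_X_pow_mul_heatSemigroup_neg (t : K) (n : ℕ) (Q : K[X]) :
    heatSemigroup t (X ^ n * heatSemigroup (-t) Q) = (raising (2 * t))^[n] Q := by
  induction n with
  | zero => rw [pow_zero, one_mul, heatSemigroup_heatSemigroup_neg, Function.iterate_zero_apply]
  | succ n ih =>
    have h := heatSemigroup_heatSemigroup_neg (-t) (X ^ n * heatSemigroup (-t) Q)
    rw [neg_neg] at h
    rw [pow_succ', mul_assoc, ← h, ih, heatSemigroup_X_mul_heatSemigroup_neg,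
      Function.iterate_succ_apply']

end HeatSemigroup

end Polynomial

theorem integrable_cexp_neg_sq_div_two_mul_pow (p : ℕ) :
    Integrable fun u : ℝ => cexp (-(u : ℂ) ^ 2 / 2) * (u : ℂ) ^ p := by
  have h := integrable_rpow_mul_exp_neg_mul_sq (b := 1 / 2) (by norm_num) (s := p)
    (by linarith [p.cast_nonneg (α := ℝ)])
  refine (h.ofReal (𝕜 := ℂ)).congr (.of_forall fun u => ?_)
  change ((u ^ (p : ℝ) * Real.exp (-(1 / 2) * u ^ 2) : ℝ) : ℂ) = _
  push_cast [Real.rpow_natCast]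
  ring_nf

theorem integrable_cexp_neg_sq_div_two_mul_eval (P : ℂ[X]) :
    Integrable fun u : ℝ => cexp (-(u : ℂ) ^ 2 / 2) * P.eval (u : ℂ) := by
  simp_rw [eval_eq_sum_range, mul_sum]
  refine integrable_finsetSum _ fun i _ => ?_
  refine ((integrable_cexp_neg_sq_div_two_mul_pow i).const_mul (P.coeff i)).congr
    (.of_forall fun u => ?_)
  ring

theorem integrable_cexp_neg_sq_div_two_mul_eval_affine (P : ℂ[X]) (z c : ℂ) :
    Integrable fun u : ℝ => cexp (-(u : ℂ) ^ 2 / 2) * P.eval (z + c * u) := by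
  have := integrable_cexp_neg_sq_div_two_mul_eval (P.comp (C z + C c * X))
  simp only [eval_comp, eval_add, eval_mul, eval_C, eval_X] at this
  exact this

theorem integral_cexp_neg_sq_div_two :
    ∫ u : ℝ, cexp (-(u : ℂ) ^ 2 / 2) = (√(2 * Real.pi) : ℝ) := by
  calc ∫ u : ℝ, cexp (-(u : ℂ) ^ 2 / 2)
      = ∫ u : ℝ, ((Real.exp (-(1 / 2) * u ^ 2) : ℝ) : ℂ) := by
        congr 1 with u
        push_cast
        ring_nf
    _ = (√(2 * Real.pi) : ℝ) := by
        rw [integral_complex_ofReal, integral_gaussian]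
        norm_num [div_div_eq_mul_div, mul_comm]

theorem integrable_ofReal_mul_cexp_neg_sq_div_two_mul_eval_affine (P : ℂ[X]) (z c : ℂ) :
    Integrable fun u : ℝ => (u : ℂ) * (cexp (-(u : ℂ) ^ 2 / 2) * P.eval (z + c * u)) := by
  have h := integrable_cexp_neg_sq_div_two_mul_eval (X * P.comp (C z + C c * X))
  simp only [eval_mul, eval_comp, eval_add, eval_C, eval_X] at h
  exact h.congr (.of_forall fun u => by ring)

theorem integral_ofReal_mul_cexp_neg_sq_div_two_mul_eval (P : ℂ[X]) (z c : ℂ) :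
    ∫ u : ℝ, (u : ℂ) * (cexp (-(u : ℂ) ^ 2 / 2) * P.eval (z + c * u)) =
      c * ∫ u : ℝ, cexp (-(u : ℂ) ^ 2 / 2) * (derivative P).eval (z + c * u) := by
  have hg (u : ℝ) : HasDerivAt (fun u : ℝ => cexp (-(u : ℂ) ^ 2 / 2))
      (-(u : ℂ) * cexp (-(u : ℂ) ^ 2 / 2)) u := by
    have h : HasDerivAt (fun w : ℂ => cexp (-w ^ 2 / 2))
        (cexp (-(u : ℂ) ^ 2 / 2) * (-(2 * (u : ℂ) ^ 1) / 2)) u :=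
      ((hasDerivAt_pow 2 (u : ℂ)).neg.div_const 2).cexp
    exact h.comp_ofReal.congr_deriv (by ring)
  have hF (u : ℝ) : HasDerivAt (fun u : ℝ => P.eval (z + c * u))
      (c * (derivative P).eval (z + c * u)) u := by
    have h : HasDerivAt ((fun w => P.eval w) ∘ fun w : ℂ => z + c * w)
        ((derivative P).eval (z + c * u) * (c * 1)) u :=
      (P.hasDerivAt (z + c * u)).comp (u : ℂ)
        (((hasDerivAt_id (u : ℂ)).const_mul c).const_add z)
    exact h.comp_ofReal.congr_deriv (by ring)
  have ibp := integral_mul_deriv_eq_deriv_mul_of_integrable (fun u _ => hF u) (fun u _ => hg u)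
    ((integrable_ofReal_mul_cexp_neg_sq_div_two_mul_eval_affine P z c).neg.congr
      (.of_forall fun u => by simp only [Pi.mul_apply, Pi.neg_apply]; ring))
    (((integrable_cexp_neg_sq_div_two_mul_eval_affine (derivative P) z c).const_mul c).congr
      (.of_forall fun u => by simp only [Pi.mul_apply]; ring))
    ((integrable_cexp_neg_sq_div_two_mul_eval_affine P z c).congr
      (.of_forall fun u => by simp only [Pi.mul_apply]; ring))
  calc ∫ u : ℝ, (u : ℂ) * (cexp (-(u : ℂ) ^ 2 / 2) * P.eval (z + c * u))
      = -∫ u : ℝ, P.eval (z + c * u) * (-(u : ℂ) * cexp (-(u : ℂ) ^ 2 / 2)) := by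
        rw [← integral_neg]
        congr 1 with u
        ring
    _ = c * ∫ u : ℝ, cexp (-(u : ℂ) ^ 2 / 2) * (derivative P).eval (z + c * u) := by
        rw [ibp, neg_neg, ← integral_const_mul]
        congr 1 with u
        ring

theorem integral_cexp_neg_sq_div_two_mul_eval_X_mul (P : ℂ[X]) (z c : ℂ) :
    ∫ u : ℝ, cexp (-(u : ℂ) ^ 2 / 2) * (X * P).eval (z + c * u) =
      z * (∫ u : ℝ, cexp (-(u : ℂ) ^ 2 / 2) * P.eval (z + c * u)) +
        c ^ 2 * ∫ u : ℝ, cexp (-(u : ℂ) ^ 2 / 2) * (derivative P).eval (z + c * u) := by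
  calc ∫ u : ℝ, cexp (-(u : ℂ) ^ 2 / 2) * (X * P).eval (z + c * u)
      = ∫ u : ℝ, (z * (cexp (-(u : ℂ) ^ 2 / 2) * P.eval (z + c * u)) +
          c * ((u : ℂ) * (cexp (-(u : ℂ) ^ 2 / 2) * P.eval (z + c * u)))) := by
        congr 1 with u
        rw [eval_mul, eval_X]
        ring
    _ = _ := by
        rw [integral_add ((integrable_cexp_neg_sq_div_two_mul_eval_affine P z c).const_mul z)
            ((integrable_ofReal_mul_cexp_neg_sq_div_two_mul_eval_affine P z c).const_mul c),
          integral_const_mul, integral_const_mul,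
          integral_ofReal_mul_cexp_neg_sq_div_two_mul_eval, ← mul_assoc, sq]

theorem integral_cexp_neg_sq_div_two_mul_eval (P : ℂ[X]) (z c : ℂ) :
    ∫ u : ℝ, cexp (-(u : ℂ) ^ 2 / 2) * P.eval (z + c * u) =
      (√(2 * Real.pi) : ℝ) * (heatSemigroup (c ^ 2 / 2) P).eval z := by
  induction hd : P.natDegree using Nat.strong_induction_on generalizing P with
  | _ d ih =>
    rcases Nat.eq_zero_or_pos d with rfl | hpos
    · rw [eq_C_of_natDegree_eq_zero hd, heatSemigroup_C]
      simp only [eval_C, integral_mul_const, integral_cexp_neg_sq_div_two]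
    have hdivX : P.divX.natDegree < d := by rw [natDegree_divX_eq_natDegree_tsub_one]; omega
    have hderiv : (derivative P.divX).natDegree < d :=
      (natDegree_derivative_le _).trans_lt (by omega)
    rw [← X_mul_divX_add P, heatSemigroup_add, heatSemigroup_X_mul, heatSemigroup_C]
    simp only [eval_add, mul_add]
    rw [integral_add (integrable_cexp_neg_sq_div_two_mul_eval_affine _ z c)
        (integrable_cexp_neg_sq_div_two_mul_eval_affine _ z c),
      integral_cexp_neg_sq_div_two_mul_eval_X_mul, ih _ hdivX _ rfl, ih _ hderiv _ rfl,
      ← heatSemigroup_derivative]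
    simp only [eval_C, integral_mul_const, integral_cexp_neg_sq_div_two, eval_mul, eval_X,
      eval_smul, smul_eq_mul]
    ring

theorem mhP_eq_eval_heatSemigroup {m : ℕ} (a : Fin m → ℝ) (ν : Fin m → ℕ) (x : ℝ) :
    mhP a ν x = (heatSemigroup (-(1 / 2)) (∏ k, (X - C (a k : ℂ)) ^ ν k)).eval (x : ℂ) := by
  have hprod (u : ℝ) : ∏ k, ((x : ℂ) - (a k : ℂ) + I * (u : ℂ)) ^ ν k =
      (∏ k, (X - C (a k : ℂ)) ^ ν k).eval (x + I * u) := by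
    simp only [eval_prod, eval_pow, eval_sub, eval_X, eval_C]
    exact prod_congr rfl fun k _ => by ring
  have hsqrt : ((√(2 * Real.pi) : ℝ) : ℂ) ≠ 0 := by
    exact_mod_cast (Real.sqrt_pos.mpr (by positivity)).ne'
  simp only [mhP, hprod, integral_cexp_neg_sq_div_two_mul_eval, I_sq, ← mul_assoc,
    inv_mul_cancel₀ hsqrt, one_mul]
  norm_num

theorem integral_eval_mul_cexp_neg_sq_div_two_add (P : ℂ[X]) (b : ℝ) :
    ∫ x : ℝ, P.eval (x : ℂ) * cexp (-(x : ℂ) ^ 2 / 2 + b * x) =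
      (√(2 * Real.pi) : ℝ) * cexp (b ^ 2 / 2) * (heatSemigroup (1 / 2) P).eval (b : ℂ) := by
  rw [← integral_add_right_eq_self _ b]
  calc ∫ u : ℝ, P.eval ((u + b : ℝ) : ℂ) * cexp (-((u + b : ℝ) : ℂ) ^ 2 / 2 + b * (u + b : ℝ))
      = ∫ u : ℝ, cexp (b ^ 2 / 2) *
          (cexp (-(u : ℂ) ^ 2 / 2) * P.eval ((b : ℂ) + 1 * (u : ℂ))) := by
        congr 1 with u
        rw [← mul_assoc, ← exp_add]
        push_cast
        ring_nf
    _ = _ := by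
        rw [integral_const_mul, integral_cexp_neg_sq_div_two_mul_eval, one_pow]
        ring

theorem stmt_2_general (m : ℕ) (a : Fin m → ℝ) (n : Fin m → ℕ) :
    ∀ k : Fin m,
      ∫ x : ℝ, mhP a n x * (x : ℂ) ^ (n k) *
        Complex.exp (-(x : ℂ) ^ 2 / 2 + (a k : ℂ) * (x : ℂ)) =
      ((Real.sqrt (2 * Real.pi) * (n k).factorial * Real.exp ((a k) ^ 2 / 2) *
        ∏ l ∈ Finset.univ.erase k, (a k - a l) ^ (n l) : ℝ) : ℂ) := by
  intro k
  set Q := ∏ l, (X - C (a l : ℂ)) ^ n l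
  set R := ∏ l ∈ univ.erase k, (X - C (a l : ℂ)) ^ n l
  have hQR : Q = (X - C (a k : ℂ)) ^ n k * R := (mul_prod_erase _ _ (mem_univ k)).symm
  calc ∫ x : ℝ, mhP a n x * (x : ℂ) ^ (n k) * cexp (-(x : ℂ) ^ 2 / 2 + (a k : ℂ) * (x : ℂ))
      = ∫ x : ℝ, (X ^ n k * heatSemigroup (-(1 / 2)) Q).eval (x : ℂ) *
          cexp (-(x : ℂ) ^ 2 / 2 + (a k : ℂ) * (x : ℂ)) := by
        congr 1 with x
        rw [mhP_eq_eval_heatSemigroup, eval_mul, eval_pow, eval_X, mul_comm (_ ^ _)]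
    _ = (√(2 * Real.pi) : ℝ) * cexp ((a k : ℂ) ^ 2 / 2) *
          ((raising 1)^[n k] Q).eval (a k : ℂ) := by
        rw [integral_eval_mul_cexp_neg_sq_div_two_add, heatSemigroup_X_pow_mul_heatSemigroup_neg,
          mul_one_div_cancel two_ne_zero]
    _ = _ := by
        rw [eval_iterate_raising_of_dvd _ _ (hQR ▸ dvd_mul_right _ _), hQR,
          eval_iterate_derivative_X_sub_C_pow_mul, eval_prod]
        simp only [eval_pow, eval_sub, eval_X, eval_C, one_pow, one_mul]
        push_cast
        ring

theorem stmt_2 (m : ℕ) (hm : 1 ≤ m) (a : Fin m → ℝ) (ha : Function.Injective a)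
    (n : Fin m → ℕ) (hn : ∀ k, 1 ≤ n k) :
    ∀ k : Fin m,
      ∫ x : ℝ, mhP a n x * (x : ℂ) ^ (n k) *
        Complex.exp (-(x : ℂ) ^ 2 / 2 + (a k : ℂ) * (x : ℂ)) =
      ((Real.sqrt (2 * Real.pi) * (n k).factorial * Real.exp ((a k) ^ 2 / 2) *
        ∏ l ∈ Finset.univ.erase k, (a k - a l) ^ (n l) : ℝ) : ℂ) :=
  stmt_2_general m a n
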